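/- arXiv:2211.14028 — 4 statements merged into one kernel-verified Lean document; each statement's English description precedes it below -/
import Mathlib

section
/- Let A_1 ⋉ ⋯ ⋉ A_d be an automata cascade with d ≥ 2 components, where A_i is an automaton with input alphabet Σ_1 × ⋯ × Σ_i and output alphabet Σ_{i+1}, and write A_i also for the string function it implements. Then the string function implemented by the cascade equals the composition overline(I* × A_1) ∘ overline(I* × A_2) ∘ ⋯ ∘ overline(I* × A_{d−1}) ∘ A_d. -/
universe u

/-- A nonempty string over `σ`: first letter together with the remaining letters. -/
def NEStr (σ : Type u) : Type u := σ × List σ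

/-- The underlying list of letters of a nonempty string. -/
def NEStr.toList {σ : Type u} (x : NEStr σ) : List σ := x.1 :: x.2

/-- The last letter of a nonempty string. -/
def NEStr.lastLetter {σ : Type u} (x : NEStr σ) : σ := x.2.getLastD x.1

/-- Composition in the paper's order: `(f ∘ g)(x) = g (f x)`. -/
def pcomp {α β γ : Type*} (f : α → β) (g : β → γ) : α → γ := fun x => g (f x)

/-- Cross product of functions: `(f × h)(x) = ⟨f x, h x⟩`. -/
def cross {α β γ : Type*} (f : α → β) (h : α → γ) : α → β × γ := fun x => (f x, h x)

/-- For `f : σ → γ`, the function `f*` maps a nonempty string `σ₁ … σₙ` to `f σₙ`. -/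
def star {σ γ : Type*} (f : σ → γ) : NEStr σ → γ := fun x => f (NEStr.lastLetter x)

/-- For `g` on nonempty strings, `overline g` maps `σ₁ … σₙ` to the nonempty
string `g(σ₁) g(σ₁σ₂) ⋯ g(σ₁ … σₙ)`. -/
def overline {σ γ : Type*} (g : NEStr σ → γ) : NEStr σ → NEStr γ :=
  fun x => (g (x.1, []), (List.range x.2.length).map fun i => g (x.1, x.2.take (i + 1)))

/-- An automaton with input alphabet `σ` and output alphabet `γ`:
states, transition function, initial state, and output function. -/
structure Aut (σ γ : Type u) : Type (u + 1) where
  Q : Type u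
  δ : Q → σ → Q
  init : Q
  θ : Q → σ → γ

/-- The string function implemented by an automaton:
`A(σ₁ … σₘ) = θ(δ(q_init, σ₁ … σₘ₋₁), σₘ)`. -/
def Aut.fn {σ γ : Type u} (A : Aut σ γ) : NEStr σ → γ :=
  fun w => A.θ ((NEStr.toList w).dropLast.foldl A.δ A.init) (NEStr.lastLetter w)

/-- An automata cascade `A₁ ⋉ ⋯ ⋉ A_d`: component `A_i` reads the input of the
preceding component together with its output, i.e. `A_{i+1}` has input alphabet
`(Σ₁ × ⋯ × Σ_i) × Σ_{i+1}`. -/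
inductive Cascade : Type u → Type u → Type (u + 1)
  | single {σ γ : Type u} : Aut σ γ → Cascade σ γ
  | cons {σ γ₁ γ : Type u} : Aut σ γ₁ → Cascade (σ × γ₁) γ → Cascade σ γ

/-- The number `d` of components of a cascade. -/
def Cascade.length : ∀ {σ γ : Type u}, Cascade σ γ → ℕ
  | _, _, .single _ => 1
  | _, _, .cons _ rest => rest.length + 1

/-- The product automaton corresponding to a cascade: its states are tuples of
component states, each component reads the external input together with the
outputs of the preceding components, and the overall output is the output of
the last component. -/
def Cascade.toAut : ∀ {σ γ : Type u}, Cascade σ γ → Aut σ γ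
  | _, _, .single A => A
  | _, _, .cons A rest =>
    let R := rest.toAut
    { Q := A.Q × R.Q
      δ := fun p s => (A.δ p.1 s, R.δ p.2 (s, A.θ p.1 s))
      init := (A.init, R.init)
      θ := fun p s => R.θ p.2 (s, A.θ p.1 s) }

/-- The composition `overline(I* × A₁) ∘ ⋯ ∘ overline(I* × A_{d−1}) ∘ A_d`. -/
def Cascade.funComp : ∀ {σ γ : Type u}, Cascade σ γ → (NEStr σ → γ)
  | _, _, .single A => A.fn
  | _, _, .cons A rest =>
    pcomp (overline (cross (star (id : _ → _)) A.fn)) rest.funComp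

/-! By induction on the cascade it suffices to treat two components, `A` followed by `R`.
After a word `w` the product automaton is in state `(A.run w, R.run w')`, where `w'` is `w`
with each letter paired with `A`'s output at that position, that is `w' = overline(I* × A)(w)`;
its output on the next letter is therefore `R`'s output on `w'` extended by one annotated letter. -/

def NEStr.snoc {σ : Type u} (x : NEStr σ) (b : σ) : NEStr σ := (x.1, x.2 ++ [b])

namespace NEStr

variable {σ : Type u}

@[elab_as_elim]
theorem snoc_induction {motive : NEStr σ → Prop} (single : ∀ a, motive (a, []))
    (snoc : ∀ x b, motive x → motive (x.snoc b)) (x : NEStr σ) : motive x := by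
  obtain ⟨a, l⟩ := x
  induction l using List.reverseRecOn with
  | nil => exact single a
  | append_singleton l b ih => exact snoc (a, l) b ih

@[simp]
theorem toList_snoc (x : NEStr σ) (b : σ) : (x.snoc b).toList = x.toList ++ [b] := rfl

@[simp]
theorem lastLetter_snoc (x : NEStr σ) (b : σ) : (x.snoc b).lastLetter = b := by
  simp [snoc, lastLetter]

end NEStr

theorem overline_snoc {σ γ : Type*} (g : NEStr σ → γ) (x : NEStr σ) (b : σ) :
    overline g (x.snoc b) = (overline g x).snoc (g (x.snoc b)) := by
  simp only [overline, NEStr.snoc, List.length_append, List.length_singleton,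
    List.range_succ, List.map_append, List.map_singleton]
  congr 2
  · refine List.map_congr_left fun i hi => ?_
    rw [List.take_append_of_le_length (by simpa using hi)]
  · rw [List.take_of_length_le (by simp)]

namespace Aut

variable {σ γ₁ γ : Type u}

def run (A : Aut σ γ) (w : List σ) : A.Q := w.foldl A.δ A.init

@[simp]
theorem run_concat (A : Aut σ γ) (w : List σ) (b : σ) :
    A.run (w ++ [b]) = A.δ (A.run w) b := by
  simp [run]

theorem fn_snoc (A : Aut σ γ) (x : NEStr σ) (b : σ) :
    A.fn (x.snoc b) = A.θ (A.run x.toList) b := by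
  simp [fn, run]

def cascadeProd (A : Aut σ γ₁) (R : Aut (σ × γ₁) γ) : Aut σ γ where
  Q := A.Q × R.Q
  δ p s := (A.δ p.1 s, R.δ p.2 (s, A.θ p.1 s))
  init := (A.init, R.init)
  θ p s := R.θ p.2 (s, A.θ p.1 s)

variable (A : Aut σ γ₁) (R : Aut (σ × γ₁) γ)

theorem cross_star_id_fn_snoc (x : NEStr σ) (b : σ) :
    cross (star id) A.fn (x.snoc b) = (b, A.θ (A.run x.toList) b) := by
  simp only [cross, _root_.star, NEStr.lastLetter_snoc, id, fn_snoc]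

theorem cascadeProd_run (x : NEStr σ) :
    (A.cascadeProd R).run x.toList
      = (A.run x.toList, R.run (overline (cross (star id) A.fn) x).toList) := by
  induction x using NEStr.snoc_induction with
  | single a => rfl
  | snoc x b ih =>
    simp only [NEStr.toList_snoc, run_concat, ih, overline_snoc, cross_star_id_fn_snoc]
    rfl

theorem cascadeProd_fn :
    (A.cascadeProd R).fn = pcomp (overline (cross (star id) A.fn)) R.fn := by
  funext x
  induction x using NEStr.snoc_induction with
  | single a => rfl
  | snoc x b _ =>
    simp only [pcomp, fn_snoc, cascadeProd_run, overline_snoc, cross_star_id_fn_snoc]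
    rfl

end Aut

theorem Cascade.toAut_cons {σ γ₁ γ : Type u} (A : Aut σ γ₁) (rest : Cascade (σ × γ₁) γ) :
    (Cascade.cons A rest).toAut = A.cascadeProd rest.toAut := rfl

theorem cascade_fn_eq_funComp_general {σ γ : Type u} (C : Cascade σ γ) :
    C.toAut.fn = C.funComp := by
  induction C with
  | single A => rfl
  | cons A rest ih => rw [Cascade.toAut_cons, Aut.cascadeProd_fn, ih]; rfl

/-- The string function implemented by an automata cascade with `d ≥ 2`
components equals `overline(I* × A₁) ∘ overline(I* × A₂) ∘ ⋯ ∘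
overline(I* × A_{d−1}) ∘ A_d`. -/
theorem cascade_fn_eq_funComp {σ γ : Type u} (C : Cascade σ γ)
    (hd : 2 ≤ C.length) : C.toAut.fn = C.funComp :=
  cascade_fn_eq_funComp_general C
end

section
/- Let C = A_1 ⋉ ⋯ ⋉ A_d be a class of automata cascades where A_i = A(Φ_i, Δ_i, Θ_i; a_i, m_i, Π_i, Γ_i), each Δ_i a finite class of semiautomata, viewed as a class of string functions on nonempty strings of length at most M. Then the growth of C satisfies G(C, ℓ) ≤ ∏_{i=1}^{d} C(a_i, m_i) · |Δ_i| · G(Φ_i, ℓ·M) · G(Θ_i, ℓ·M), where C(a_i, m_i) is the binomial coefficient. -/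
/-!
On `ℓ` words of length at most `M`, a cascade is governed component by component by the
outputs on the at most `ℓ·M` prefixes of those words: the first component's outputs on the
prefixes determine the words (of the same lengths) read by the rest of the cascade, so the counts
multiply. For a single automaton, evaluated on a sample of `p` words in which every letter
occurring is the last letter of some sample word, the outputs are determined by its dependency
set (`C(a, m)` choices), its semiautomaton (`|Δ|`), the trace of `φ` on the `p` projected last
letters (at most `G(Φ, p)`), which fixes every state reached, and the trace of `θ` on the `p`
resulting configurations (at most `G(Θ, p)`).
-/
universe u

/-- The growth `G(F, ℓ)` of a class of functions. -/
noncomputable def growth {α β : Type*} (F : Set (α → β)) (ℓ : ℕ) : ℕ∞ :=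
  ⨆ xs : Fin ℓ → α, ((fun f => fun i => f (xs i)) '' F).encard

/-- A class of string functions viewed as a class of functions on nonempty
strings of length at most `M` (by restricting the domain). -/
def restrictLen {σ γ : Type*} (M : ℕ) (F : Set (NEStr σ → γ)) :
    Set ({w : NEStr σ // (NEStr.toList w).length ≤ M} → γ) :=
  (fun f => fun w => f w.1) '' F

/-- A semiautomaton over the internal alphabet `Pi` with states `Q`. -/
structure Semiauto (Pi Q : Type u) where
  δ : Q → Pi → Q
  init : Q

/-- The function implemented by a semiautomaton. -/
def Semiauto.run {Pi Q : Type u} (D : Semiauto Pi Q) : List Pi → Q :=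
  fun w => w.foldl D.δ D.init

/-- An automaton over the factored input alphabet `X^a`. -/
structure FAut (X : Type u) (a m : ℕ) (Pi Q Γ : Type u) where
  J : Finset (Fin a)
  hJ : J.card = m
  φ : (Fin m → X) → Pi
  sa : Semiauto Pi Q
  θ : Q × (Fin m → X) → Γ

/-- The projection `π_J : X^a → X^m` onto the coordinates in `J` (in order). -/
def proj {X : Type u} {a m : ℕ} (J : Finset (Fin a)) (hJ : J.card = m)
    (σ : Fin a → X) : Fin m → X :=
  fun i => σ (J.orderIsoOfFin hJ i).val

/-- The string function implemented by an automaton over a factored alphabet. -/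
def FAut.run {X : Type u} {a m : ℕ} {Pi Q Γ : Type u} (A : FAut X a m Pi Q Γ) :
    NEStr (Fin a → X) → Γ :=
  fun w =>
    A.θ (A.sa.run ((NEStr.toList w).dropLast.map fun σ => A.φ (proj A.J A.hJ σ)),
         proj A.J A.hJ (NEStr.lastLetter w))

/-- The data `(m, Π, Q, Φ, Δ, Θ)` specifying a class of automata over a factored
alphabet with domain `X` and output alphabet `Out` (the arity is supplied
separately). -/
structure Spec (X Out : Type u) : Type (u + 1) where
  m : ℕ
  Pi : Type u
  Q : Type u
  Phi : Set ((Fin m → X) → Pi)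
  Delta : Set (Semiauto Pi Q)
  Theta : Set (Q × (Fin m → X) → Out)

/-- The string functions implemented by the automata in the class
`𝒜(Φ, Δ, Θ; k, m, Π, Γ)` described by a spec `s` at input arity `k`. -/
def specFuns {X Out : Type u} (k : ℕ) (s : Spec X Out) :
    Set (NEStr (Fin k → X) → Out) :=
  {f | ∃ A : FAut X k s.m s.Pi s.Q Out,
        A.φ ∈ s.Phi ∧ A.sa ∈ s.Delta ∧ A.θ ∈ s.Theta ∧ f = FAut.run A}

/-- The class of string functions implemented by cascades `𝒜₁ ⋉ ⋯ ⋉ 𝒜_d` whose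
`i`-th component is drawn from the class described by the `i`-th spec (the last
component has output alphabet `Γ`, the preceding ones output `X`, which is
appended to the input tuple passed on to the next component; the `i`-th
component thus has input arity `k + i − 1`). -/
def cascadeClass {X Γ : Type u} (lastS : Spec X Γ) :
    (specs : List (Spec X X)) → (k : ℕ) → Set (NEStr (Fin k → X) → Γ)
  | [], k => specFuns k lastS
  | s :: rest, k =>
    {F | ∃ f ∈ specFuns k s, ∃ g ∈ cascadeClass lastS rest (k + 1),
      F = pcomp (overline fun w => Fin.snoc (NEStr.lastLetter w) (f w)) g}

/-- The factor `C(k, m_i) · |Δ_i| · G(Φ_i, ℓΦ) · G(Θ_i, ℓΘ)` contributed by one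
cascade component. -/
noncomputable def specTerm {X Out : Type u} (k ℓΦ ℓΘ : ℕ) (s : Spec X Out) : ℕ∞ :=
  (Nat.choose k s.m : ℕ∞) * s.Delta.encard * growth s.Phi ℓΦ * growth s.Theta ℓΘ

open Set

theorem Set.encard_image_le_mul_of_fibers {α β κ : Type*} {S : Set α} (g : α → β)
    (key : α → κ) {b : ℕ∞}
    (hb : ∀ a ∈ S, (g '' {a' ∈ S | key a' = key a}).encard ≤ b) :
    (g '' S).encard ≤ (key '' S).encard * b := by
  have hcover : g '' S = ⋃ c ∈ key '' S, g '' {a' ∈ S | key a' = c} := by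
    ext y
    simp only [mem_image, mem_iUnion, mem_ofPred_eq, exists_prop]
    exact ⟨fun ⟨a, ha, hy⟩ => ⟨key a, ⟨a, ha, rfl⟩, a, ⟨ha, rfl⟩, hy⟩,
      fun ⟨_, _, a, ⟨ha, _⟩, hy⟩ => ⟨a, ha, hy⟩⟩
  have hfiber : ∀ c ∈ key '' S, (g '' {a' ∈ S | key a' = c}).encard ≤ b := by
    rintro _ ⟨a, ha, rfl⟩
    exact hb a ha
  rcases (key '' S).finite_or_infinite with hfin | hinf
  · calc (g '' S).encard
        = (⋃ c ∈ hfin.toFinset, g '' {a' ∈ S | key a' = c}).encard := by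
          simp only [hcover, Finite.mem_toFinset]
      _ ≤ ∑ c ∈ hfin.toFinset, (g '' {a' ∈ S | key a' = c}).encard :=
          Finset.set_encard_biUnion_le _ _
      _ ≤ hfin.toFinset.card • b :=
          Finset.sum_le_card_nsmul _ _ _ fun c hc => hfiber c (hfin.mem_toFinset.mp hc)
      _ = (key '' S).encard * b := by rw [nsmul_eq_mul, hfin.encard_eq_coe_toFinset_card]
  · rw [hinf.encard_eq]
    rcases eq_or_ne b 0 with rfl | hb0
    · rw [mul_zero, nonpos_iff_eq_zero, encard_eq_zero, image_eq_empty]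
      refine eq_empty_of_forall_notMem fun a ha => ?_
      have hempty := encard_eq_zero.mp (nonpos_iff_eq_zero.mp (hb a ha))
      exact (image_eq_empty.mp hempty).subset ⟨ha, rfl⟩
    · rw [ENat.top_mul hb0]
      exact le_top

/-- `N(F, X_ℓ)` is the `encard` of `traces F X_ℓ`. -/
def traces {α β ι : Type*} (F : Set (α → β)) (xs : ι → α) : Set (ι → β) :=
  (fun f i => f (xs i)) '' F

theorem encard_traces_le_growth {α β : Type*} (F : Set (α → β)) {n : ℕ}
    (xs : Fin n → α) :
    (traces F xs).encard ≤ growth F n :=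
  le_iSup (fun xs : Fin n → α => (traces F xs).encard) xs

theorem traces_restrictLen {σ γ : Type*} {M : ℕ} (F : Set (NEStr σ → γ)) {ι : Type*}
    (xs : ι → {w : NEStr σ // (NEStr.toList w).length ≤ M}) :
    traces (restrictLen M F) xs = traces F fun i => (xs i).1 := by
  simp only [traces, restrictLen, image_image]

section Automata

variable {X Out : Type u} {k m : ℕ} {Pi Q : Type u}

theorem proj_eq_of_eq {J J' : Finset (Fin k)} (h : J = J') (hJ : J.card = m)
    (hJ' : J'.card = m) :
    (proj J hJ : (Fin k → X) → Fin m → X) = proj J' hJ' := by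
  subst h
  rfl

def FAut.config (A : FAut X k m Pi Q Out) (w : NEStr (Fin k → X)) : Q × (Fin m → X) :=
  (A.sa.run ((NEStr.toList w).dropLast.map fun σ => A.φ (proj A.J A.hJ σ)),
    proj A.J A.hJ (NEStr.lastLetter w))

theorem FAut.run_eq_θ_config (A : FAut X k m Pi Q Out) (w : NEStr (Fin k → X)) :
    A.run w = A.θ (A.config w) :=
  rfl

theorem FAut.config_eq_of_agree {A A' : FAut X k m Pi Q Out} (hJ : A.J = A'.J)
    (hsa : A.sa = A'.sa) {w : NEStr (Fin k → X)}
    (hφ : ∀ σ ∈ (NEStr.toList w).dropLast,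
      A.φ (proj A.J A.hJ σ) = A'.φ (proj A'.J A'.hJ σ)) :
    A.config w = A'.config w := by
  simp only [FAut.config, proj_eq_of_eq hJ A.hJ A'.hJ, hsa] at hφ ⊢
  rw [List.map_congr_left hφ]

def Spec.automata (k : ℕ) (s : Spec X Out) : Set (FAut X k s.m s.Pi s.Q Out) :=
  {A | A.φ ∈ s.Phi ∧ A.sa ∈ s.Delta ∧ A.θ ∈ s.Theta}

theorem specFuns_eq_image_run (k : ℕ) (s : Spec X Out) :
    specFuns k s = FAut.run '' s.automata k := by
  ext f
  simp only [specFuns, Spec.automata, mem_image, mem_ofPred_eq]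
  exact ⟨fun ⟨A, h1, h2, h3, hf⟩ => ⟨A, ⟨h1, h2, h3⟩, hf.symm⟩,
    fun ⟨A, ⟨h1, h2, h3⟩, hf⟩ => ⟨A, h1, h2, h3, hf.symm⟩⟩

theorem encard_image_J_sa_automata_le (k : ℕ) (s : Spec X Out) :
    ((fun A => (A.J, A.sa)) '' s.automata k).encard ≤ Nat.choose k s.m * s.Delta.encard := by
  calc ((fun A => (A.J, A.sa)) '' s.automata k).encard
      ≤ ((Finset.powersetCard s.m (Finset.univ : Finset (Fin k)) : Set (Finset (Fin k))) ×ˢ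
          s.Delta).encard := by
        refine encard_mono ?_
        rintro _ ⟨A, hA, rfl⟩
        exact ⟨Finset.mem_powersetCard_univ.mpr A.hJ, hA.2.1⟩
    _ = Nat.choose k s.m * s.Delta.encard := by
        rw [encard_prod, encard_coe_eq_coe_finsetCard, Finset.card_powersetCard, Finset.card_fin]

theorem encard_traces_specFuns_le (s : Spec X Out) {p : ℕ} (ws : Fin p → NEStr (Fin k → X))
    (hcov : ∀ i, ∀ σ ∈ NEStr.toList (ws i), ∃ j, NEStr.lastLetter (ws j) = σ) :
    (traces (specFuns k s) ws).encard ≤ specTerm k p p s := by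
  let inputTrace (A : FAut X k s.m s.Pi s.Q Out) : Fin p → s.Pi :=
    fun j => A.φ (proj A.J A.hJ (NEStr.lastLetter (ws j)))
  have hinput : ((fun A => ((A.J, A.sa), inputTrace A)) '' s.automata k).encard ≤
      ((fun A => (A.J, A.sa)) '' s.automata k).encard * growth s.Phi p := by
    refine encard_image_le_mul_of_fibers _ _ fun A₀ _ => ?_
    calc _ ≤ ((fun u => ((A₀.J, A₀.sa), u)) ''
            traces s.Phi fun j => proj A₀.J A₀.hJ (NEStr.lastLetter (ws j))).encard := by
          refine encard_mono ?_
          rintro _ ⟨A, ⟨hA, hkey⟩, rfl⟩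
          simp only [Prod.mk.injEq] at hkey
          refine ⟨inputTrace A, ⟨A.φ, hA.1, ?_⟩, by simp only [inputTrace, hkey]⟩
          simp only [inputTrace, proj_eq_of_eq hkey.1 A.hJ A₀.hJ]
      _ ≤ growth s.Phi p := (encard_image_le _ _).trans (encard_traces_le_growth _ _)
  have houtput : (traces (specFuns k s) ws).encard ≤
      ((fun A => ((A.J, A.sa), inputTrace A)) '' s.automata k).encard * growth s.Theta p := by
    rw [specFuns_eq_image_run, traces, image_image]
    refine encard_image_le_mul_of_fibers _ _ fun A₀ _ => ?_
    calc _ ≤ (traces s.Theta fun i => A₀.config (ws i)).encard := by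
          refine encard_mono ?_
          rintro _ ⟨A, ⟨hA, hkey⟩, rfl⟩
          simp only [Prod.mk.injEq] at hkey
          refine ⟨A.θ, hA.2.2, funext fun i => ?_⟩
          show A.θ (A₀.config (ws i)) = A.run (ws i)
          rw [FAut.run_eq_θ_config, FAut.config_eq_of_agree hkey.1.1 hkey.1.2]
          intro σ hσ
          obtain ⟨j, rfl⟩ := hcov i σ (List.dropLast_subset _ hσ)
          exact congrFun hkey.2 j
      _ ≤ growth s.Theta p := encard_traces_le_growth _ _
  calc (traces (specFuns k s) ws).encard
      ≤ ((fun A => (A.J, A.sa)) '' s.automata k).encard * growth s.Phi p * growth s.Theta p := by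
        grw [houtput, hinput]
    _ ≤ specTerm k p p s := by
        grw [encard_image_J_sa_automata_le]
        rfl

end Automata

section Prefixes

variable {σ : Type*}

/-- The prefix of `w` consisting of its first `r + 1` letters. -/
def NEStr.take (w : NEStr σ) (r : ℕ) : NEStr σ := (w.1, w.2.take r)

theorem NEStr.take_length (w : NEStr σ) : w.take w.2.length = w := by
  simp only [NEStr.take, List.take_length]
  rfl

theorem NEStr.mem_toList_of_mem_take {w : NEStr σ} {r : ℕ} {a : σ}
    (h : a ∈ NEStr.toList (w.take r)) : a ∈ NEStr.toList w := by
  simp only [NEStr.toList, NEStr.take, List.mem_cons] at h ⊢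
  exact h.imp_right fun h => List.take_subset _ _ h

theorem NEStr.exists_lastLetter_take {w : NEStr σ} {a : σ} (h : a ∈ NEStr.toList w) :
    ∃ r ≤ w.2.length, NEStr.lastLetter (w.take r) = a := by
  rcases List.mem_cons.mp h with rfl | h
  · exact ⟨0, Nat.zero_le _, rfl⟩
  · obtain ⟨j, hj, rfl⟩ := List.getElem_of_mem h
    refine ⟨j + 1, hj, ?_⟩
    simp [NEStr.lastLetter, NEStr.take, List.getLastD_eq_getLast?, List.getLast?_take, hj]

theorem overline_congr {γ : Type*} {h h' : NEStr σ → γ} {w : NEStr σ}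
    (hw : ∀ r ≤ w.2.length, h (w.take r) = h' (w.take r)) : overline h w = overline h' w := by
  simp only [overline]
  congr 1
  · exact hw 0 (Nat.zero_le _)
  · exact List.map_congr_left fun j hj => hw (j + 1) (List.mem_range.mp hj)

theorem length_toList_overline {γ : Type*} (h : NEStr σ → γ) (w : NEStr σ) :
    (NEStr.toList (overline h w)).length = (NEStr.toList w).length := by
  simp [overline, NEStr.toList]

/-- `NEStr.take` saturates, so the entries with `r` beyond the length of word `i` repeat it. -/
def prefixSample {ℓ : ℕ} (W : Fin ℓ → NEStr σ) (M : ℕ) : Fin (ℓ * M) → NEStr σ :=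
  fun e => (W (finProdFinEquiv.symm e).1).take (finProdFinEquiv.symm e).2

variable {ℓ M : ℕ} {W : Fin ℓ → NEStr σ}

theorem exists_prefixSample_eq (hW : ∀ i, (NEStr.toList (W i)).length ≤ M) (i : Fin ℓ)
    {r : ℕ} (hr : r ≤ (W i).2.length) : ∃ e, prefixSample W M e = (W i).take r := by
  have hrM : r < M := by
    have := hW i
    simp only [NEStr.toList, List.length_cons] at this
    omega
  exact ⟨finProdFinEquiv (i, ⟨r, hrM⟩), by simp [prefixSample]⟩

theorem exists_lastLetter_prefixSample (hW : ∀ i, (NEStr.toList (W i)).length ≤ M)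
    (e : Fin (ℓ * M)) {a : σ} (ha : a ∈ NEStr.toList (prefixSample W M e)) :
    ∃ e', NEStr.lastLetter (prefixSample W M e') = a := by
  obtain ⟨r, hr, rfl⟩ := NEStr.exists_lastLetter_take (NEStr.mem_toList_of_mem_take ha)
  obtain ⟨e', he'⟩ := exists_prefixSample_eq hW _ hr
  exact ⟨e', by rw [he']⟩

end Prefixes

section Cascade

variable {X Γ : Type u}

theorem growth_restrictLen_specFuns_le (M ℓ k : ℕ) (s : Spec X Γ) :
    growth (restrictLen M (specFuns k s)) ℓ ≤ specTerm k (ℓ * M) (ℓ * M) s := by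
  refine iSup_le fun xs => ?_
  set W := fun i => (xs i).1
  have hW : ∀ i, (NEStr.toList (W i)).length ≤ M := fun i => (xs i).2
  choose pos hpos using fun i => exists_prefixSample_eq hW i le_rfl
  have hfactor : traces (specFuns k s) W =
      (fun t i => t (pos i)) '' traces (specFuns k s) (prefixSample W M) := by
    simp only [traces, image_image, hpos, NEStr.take_length]
  calc (traces (restrictLen M (specFuns k s)) xs).encard
      = ((fun t i => t (pos i)) '' traces (specFuns k s) (prefixSample W M)).encard := by
        rw [traces_restrictLen, hfactor]
    _ ≤ specTerm k (ℓ * M) (ℓ * M) s :=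
        (encard_image_le _ _).trans <|
          encard_traces_specFuns_le s _ (exists_lastLetter_prefixSample hW)

theorem cascadeClass_cons_eq_image (lastS : Spec X Γ) (s : Spec X X) (rest : List (Spec X X))
    (k : ℕ) :
    cascadeClass lastS (s :: rest) k =
      (fun q => pcomp (overline fun w => Fin.snoc (NEStr.lastLetter w) (q.1 w)) q.2) ''
        (specFuns k s ×ˢ cascadeClass lastS rest (k + 1)) := by
  ext F
  simp only [cascadeClass, mem_image, mem_prod, mem_ofPred_eq, Prod.exists]
  exact ⟨fun ⟨f, hf, g, hg, hF⟩ => ⟨f, g, ⟨hf, hg⟩, hF.symm⟩,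
    fun ⟨f, g, ⟨hf, hg⟩, hF⟩ => ⟨f, hf, g, hg, hF.symm⟩⟩

theorem growth_cascadeClass_cons_le (M ℓ k : ℕ) (lastS : Spec X Γ) (s : Spec X X)
    (rest : List (Spec X X)) :
    growth (restrictLen M (cascadeClass lastS (s :: rest) k)) ℓ ≤
      specTerm k (ℓ * M) (ℓ * M) s *
        growth (restrictLen M (cascadeClass lastS rest (k + 1))) ℓ := by
  refine iSup_le fun xs => ?_
  set W := fun i => (xs i).1
  have hW : ∀ i, (NEStr.toList (W i)).length ≤ M := fun i => (xs i).2
  let extend (f : NEStr (Fin k → X) → X) (w : NEStr (Fin k → X)) : Fin (k + 1) → X :=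
    Fin.snoc (NEStr.lastLetter w) (f w)
  show (traces _ xs).encard ≤ _
  rw [traces_restrictLen, cascadeClass_cons_eq_image, traces, image_image]
  refine (encard_image_le_mul_of_fibers (b := growth (restrictLen M
    (cascadeClass lastS rest (k + 1))) ℓ) _ (fun q e => q.1 (prefixSample W M e)) ?_).trans ?_
  · rintro ⟨f₀, g₀⟩ -
    let W' (i : Fin ℓ) : {w : NEStr (Fin (k + 1) → X) // (NEStr.toList w).length ≤ M} :=
      ⟨overline (extend f₀) (W i), (length_toList_overline _ _).trans_le (hW i)⟩
    calc _ ≤ (traces (restrictLen M (cascadeClass lastS rest (k + 1))) W').encard := by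
          refine encard_mono ?_
          rintro _ ⟨⟨f, g⟩, ⟨⟨-, hg⟩, hkey⟩, rfl⟩
          refine ⟨fun w => g w.1, ⟨g, hg, rfl⟩, funext fun i => ?_⟩
          show g (overline (extend f₀) (W i)) = g (overline (extend f) (W i))
          refine congrArg g (overline_congr fun r hr => ?_)
          obtain ⟨e, he⟩ := exists_prefixSample_eq hW i hr
          have hfe : f (prefixSample W M e) = f₀ (prefixSample W M e) := congrFun hkey e
          simp only [extend, ← he, hfe]
      _ ≤ _ := encard_traces_le_growth _ _
  · gcongr
    calc _ ≤ (traces (specFuns k s) (prefixSample W M)).encard := by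
          refine encard_mono ?_
          rintro _ ⟨q, hq, rfl⟩
          exact ⟨q.1, hq.1, rfl⟩
      _ ≤ specTerm k (ℓ * M) (ℓ * M) s :=
          encard_traces_specFuns_le s _ (exists_lastLetter_prefixSample hW)

end Cascade

theorem growth_cascadeClass_le_general {X Γ : Type u} (k M ℓ : ℕ)
    (specs : List (Spec X X)) (lastS : Spec X Γ) :
    growth (restrictLen M (cascadeClass lastS specs k)) ℓ ≤
      (∏ i : Fin specs.length,
          specTerm (k + i) (ℓ * M) (ℓ * M) (specs.get i)) *
        specTerm (k + specs.length) (ℓ * M) (ℓ * M) lastS := by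
  induction specs generalizing k with
  | nil => simpa [cascadeClass] using growth_restrictLen_specFuns_le M ℓ k lastS
  | cons s rest ih =>
    calc growth (restrictLen M (cascadeClass lastS (s :: rest) k)) ℓ
        ≤ specTerm k (ℓ * M) (ℓ * M) s *
            growth (restrictLen M (cascadeClass lastS rest (k + 1))) ℓ :=
          growth_cascadeClass_cons_le M ℓ k lastS s rest
      _ ≤ specTerm k (ℓ * M) (ℓ * M) s *
            ((∏ i : Fin rest.length, specTerm (k + 1 + i) (ℓ * M) (ℓ * M) (rest.get i)) *
              specTerm (k + 1 + rest.length) (ℓ * M) (ℓ * M) lastS) := by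
          gcongr
          exact ih (k + 1)
      _ = _ := by
          simp only [List.length_cons, Fin.prod_univ_succ, Fin.val_zero, Fin.val_succ,
            List.get_cons_zero, add_zero, mul_assoc, add_right_comm k 1]
          rfl

/-- Growth bound for a class of automata cascades viewed as string functions on
nonempty strings of length at most `M`:
`G(𝒞, ℓ) ≤ ∏_{i=1}^{d} C(a_i, m_i) · |Δ_i| · G(Φ_i, ℓ·M) · G(Θ_i, ℓ·M)`. -/
theorem growth_cascadeClass_le {X Γ : Type u} (k M ℓ : ℕ)
    (specs : List (Spec X X)) (lastS : Spec X Γ)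
    (hfin : ∀ s ∈ specs, s.Delta.Finite) (hlast : lastS.Delta.Finite) :
    growth (restrictLen M (cascadeClass lastS specs k)) ℓ ≤
      (∏ i : Fin specs.length,
          specTerm (k + i) (ℓ * M) (ℓ * M) (specs.get i)) *
        specTerm (k + specs.length) (ℓ * M) (ℓ * M) lastS :=
  growth_cascadeClass_le_general k M ℓ specs lastS
end

section
/- Let F be a class of functions from a set X to a set Y. Then for every ℓ, the growth of the binarisation of F is bounded by the growth of F: G(F_bin, ℓ) ≤ G(F, ℓ). -/
/-- The binarisation of a class of functions: `f_bin(x, y) = [f x = y]`. -/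
def binClass {α β : Type*} (F : Set (α → β)) : Set (α × β → Prop) :=
  (fun f => fun p => f p.1 = p.2) '' F

/-- `N(F, X_ℓ)` is the cardinality of this set. -/
def patterns {α β : Type*} (F : Set (α → β)) {ℓ : ℕ} (xs : Fin ℓ → α) : Set (Fin ℓ → β) :=
  (fun f i => f (xs i)) '' F

theorem encard_patterns_le_growth {α β : Type*} (F : Set (α → β)) {ℓ : ℕ} (xs : Fin ℓ → α) :
    (patterns F xs).encard ≤ growth F ℓ :=
  le_iSup (fun ys => (patterns F ys).encard) xs

theorem patterns_binClass {α β : Type*} (F : Set (α → β)) {ℓ : ℕ} (xs : Fin ℓ → α × β) :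
    patterns (binClass F) xs =
      (fun v i => v i = (xs i).2) '' patterns F (Prod.fst ∘ xs) := by
  simp only [patterns, binClass, Set.image_image, Function.comp_apply]

/-- The growth of the binarisation of a class of functions is bounded by the
growth of the class itself: `G(F_bin, ℓ) ≤ G(F, ℓ)`. -/
theorem growth_binClass_le {α β : Type*} (F : Set (α → β)) (ℓ : ℕ) :
    growth (binClass F) ℓ ≤ growth F ℓ :=
  iSup_le fun xs => calc
    (patterns (binClass F) xs).encard
        = ((fun v i => v i = (xs i).2) '' patterns F (Prod.fst ∘ xs)).encard := by
          rw [patterns_binClass]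
    _ ≤ (patterns F (Prod.fst ∘ xs)).encard := Set.encard_image_le _ _
    _ ≤ growth F ℓ := encard_patterns_le_growth F _
end

section
/- Every counter-free automaton A over a finite input alphabet Σ is captured by an automaton A′ over Σ whose core semiautomaton is a cascade product D₁ ⋉ ⋯ ⋉ D_d in which every component D_i is a flip-flop semiautomaton; that is, there exist flip-flop components D_i and an output function θ′ such that the resulting automaton implements the same string function as A. -/
universe u

/-- A semiautomaton over the input alphabet `σ`: a set of states, a transition
function, and an initial state. -/
structure SemiAut (σ : Type u) : Type (u + 1) where
  Q : Type u
  δ : Q → σ → Q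
  init : Q

/-- The cascade product `D₁ ⋉ D₂` of a semiautomaton over `σ` and a
semiautomaton over `σ × Q₁`: states `Q₁ × Q₂`, initial state `⟨q₁, q₂⟩`, and
transition `δ(⟨p, q⟩, s) = ⟨δ₁(p, s), δ₂(q, ⟨s, p⟩)⟩`. -/
def cascProd {σ : Type u} (D₁ : SemiAut.{u} σ) (D₂ : SemiAut.{u} (σ × D₁.Q)) :
    SemiAut.{u} σ where
  Q := D₁.Q × D₂.Q
  δ := fun p s => (D₁.δ p.1 s, D₂.δ p.2 (s, p.1))
  init := (D₁.init, D₂.init)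

/-- A flip-flop semiautomaton: it has exactly two states, and every input
letter acts on the states either as the identity or as a constant map. -/
def IsFlipFlop {σ : Type u} (E : SemiAut σ) : Prop :=
  (∃ q₀ q₁ : E.Q, q₀ ≠ q₁ ∧ ∀ q, q = q₀ ∨ q = q₁) ∧
  ∀ s : σ, (∀ q, E.δ q s = q) ∨ ∃ c, ∀ q, E.δ q s = c

/-- Semiautomata expressed as (left-associated) cascade products
`D₁ ⋉ ⋯ ⋉ D_d` in which every component `D_i` is a flip-flop. -/
inductive IsFFCascade : ∀ {σ : Type u}, SemiAut σ → Prop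
  | base {σ : Type u} (D : SemiAut σ) : IsFlipFlop D → IsFFCascade D
  | step {σ : Type u} (D : SemiAut σ) (E : SemiAut (σ × D.Q)) :
      IsFFCascade D → IsFlipFlop E → IsFFCascade (cascProd D E)

/-- An automaton with input alphabet `σ` and output alphabet `γ`. -/
structure Automaton (σ γ : Type u) : Type (u + 1) where
  Q : Type u
  δ : Q → σ → Q
  init : Q
  θ : Q → σ → γ

/-- The core semiautomaton of an automaton. -/
def Automaton.core {σ γ : Type u} (A : Automaton σ γ) : SemiAut σ :=
  ⟨A.Q, A.δ, A.init⟩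

/-- The string function implemented by an automaton:
`A(σ₁ … σₘ) = θ(δ(q_init, σ₁ … σₘ₋₁), σₘ)`. -/
def Automaton.fn {σ γ : Type u} (A : Automaton σ γ) : NEStr σ → γ :=
  fun w => A.θ ((NEStr.toList w).dropLast.foldl A.δ A.init) (NEStr.lastLetter w)

/-- The `n`-fold concatenation `wⁿ` of a string with itself. -/
def npow {σ : Type u} (w : List σ) : ℕ → List σ
  | 0 => []
  | n + 1 => w ++ npow w n

/-- An automaton is counter-free if for every string `w`, every state `q`, and
every `n ≥ 1`, `δ(q, wⁿ) = q` implies `δ(q, w) = q`. -/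
def CounterFree {σ γ : Type u} (A : Automaton σ γ) : Prop :=
  ∀ (w : List σ) (q : A.Q) (n : ℕ), 1 ≤ n →
    (npow w n).foldl A.δ q = q → w.foldl A.δ q = q

/-!
Counter-freeness makes the transition monoid of `A` aperiodic, and the state reached by `A` is
read off from the product in that monoid of the letters read so far. So it suffices to compute
running products `h(w)` of any map `h : A → M` into a finite aperiodic monoid by a flip-flop
cascade. This goes by induction on `|M|` and on the number of values `h a ≠ 1`: fixing one such
value `c`, every product splits into pieces computed for maps with fewer values `≠ 1` and a product
in the local divisor at `c`, which is aperiodic and, since `c` is not invertible, smaller than `M`.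
-/

theorem IsFlipFlop.comap {A B : Type u} {E : SemiAut A} (hE : IsFlipFlop E) (f : B → A)
    (i : E.Q) : IsFlipFlop (⟨E.Q, fun q b => E.δ q (f b), i⟩ : SemiAut B) :=
  ⟨hE.1, fun b => hE.2 (f b)⟩

theorem IsFlipFlop.ite {A : Type u} {E : SemiAut A} (hE : IsFlipFlop E) (sel : A → Prop)
    [DecidablePred sel] (t : E.Q) :
    IsFlipFlop (⟨E.Q, fun q a => if sel a then t else E.δ q a, E.init⟩ : SemiAut A) := by
  refine ⟨hE.1, fun a => ?_⟩
  by_cases ha : sel a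
  · exact Or.inr ⟨t, fun _ => if_pos ha⟩
  · simpa only [if_neg ha] using hE.2 a

theorem isFlipFlop_uliftBool_id {A : Type u} (i : ULift.{u} Bool) :
    IsFlipFlop (⟨ULift.{u} Bool, fun q _ => q, i⟩ : SemiAut A) := by
  refine ⟨⟨⟨false⟩, ⟨true⟩, by simp, ?_⟩, fun _ => Or.inl fun _ => rfl⟩
  rintro ⟨_ | _⟩ <;> simp

theorem IsFFCascade.withInit {A : Type u} {C : SemiAut A} (hC : IsFFCascade C) :
    ∀ i : C.Q, IsFFCascade (⟨C.Q, C.δ, i⟩ : SemiAut A) := by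
  induction hC with
  | base D hD => exact fun _ => .base _ hD
  | step D E _ hE ih => exact fun i => .step ⟨D.Q, D.δ, i.1⟩ ⟨E.Q, E.δ, i.2⟩ (ih i.1) hE

theorem IsFFCascade.ite {A : Type u} {C : SemiAut A} (hC : IsFFCascade C) :
    ∀ (sel : A → Prop) [DecidablePred sel] (t : C.Q),
      IsFFCascade (⟨C.Q, fun q a => if sel a then t else C.δ q a, C.init⟩ : SemiAut A) := by
  induction hC with
  | base D hD => exact fun sel _ t => .base _ (hD.ite sel t)
  | step D E _ hE ih =>
    intro sel _ ⟨t₁, t₂⟩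
    convert IsFFCascade.step _ _ (ih sel t₁) (hE.ite (fun x => sel x.1) t₂) using 1
    simp only [cascProd, SemiAut.mk.injEq, heq_eq_eq, true_and, and_true]
    funext q a
    by_cases ha : sel a <;> simp only [ha, ↓reduceIte]

def FFRealizable {A Q : Type u} (δ : Q → A → Q) : Prop :=
  ∃ (C : SemiAut A) (e : C.Q ≃ Q), IsFFCascade C ∧ ∀ p a, e (C.δ p a) = δ (e p) a

namespace FFRealizable

variable {A Q₁ Q₂ : Type u} {δ₁ : Q₁ → A → Q₁}

theorem of_isFFCascade {C : SemiAut A} (hC : IsFFCascade C) : FFRealizable C.δ :=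
  ⟨C, Equiv.refl _, hC, fun _ _ => rfl⟩

theorem congr (h₁ : FFRealizable δ₁) {δ₂ : Q₂ → A → Q₂} (e : Q₁ ≃ Q₂)
    (he : ∀ q a, e (δ₁ q a) = δ₂ (e q) a) : FFRealizable δ₂ := by
  obtain ⟨C, e₁, hC, he₁⟩ := h₁
  exact ⟨C, e₁.trans e, hC, fun p a => by simp [he₁, he]⟩

theorem uliftBool_id : FFRealizable (fun (q : ULift.{u} Bool) (_ : A) => q) :=
  of_isFFCascade (.base _ (isFlipFlop_uliftBool_id ⟨false⟩))

theorem ite (h₁ : FFRealizable δ₁) (sel : A → Prop) [DecidablePred sel] (t : Q₁) :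
    FFRealizable (fun q a => if sel a then t else δ₁ q a) := by
  obtain ⟨C, e, hC, he⟩ := h₁
  refine ⟨⟨C.Q, fun q a => if sel a then e.symm t else C.δ q a, C.init⟩, e, hC.ite sel (e.symm t),
    fun p a => ?_⟩
  by_cases ha : sel a <;> simp [ha, he]

theorem cascade_of_isFFCascade {τ : Type u} {C₂ : SemiAut τ} (hC₂ : IsFFCascade C₂) :
    ∀ {A Q₁ : Type u} {δ₁ : Q₁ → A → Q₁}, FFRealizable δ₁ → ∀ g : A → Q₁ → τ,
      FFRealizable (fun (q : Q₁ × C₂.Q) a => (δ₁ q.1 a, C₂.δ q.2 (g a q.1))) := by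
  induction hC₂ with
  | base E hE =>
    rintro A Q₁ δ₁ ⟨C₁, e₁, hC₁, he₁⟩ g
    exact ⟨cascProd C₁ ⟨E.Q, fun q x => E.δ q (g x.1 (e₁ x.2)), E.init⟩,
      e₁.prodCongr (Equiv.refl _), .step _ _ hC₁ (hE.comap _ _),
      fun p a => Prod.ext (he₁ p.1 a) rfl⟩
  | step D E _ hE ih =>
    intro A Q₁ δ₁ h₁ g
    obtain ⟨C, e, hC, he⟩ := ih h₁ g
    exact ⟨cascProd C ⟨E.Q, fun q x => E.δ q (g x.1 (e x.2).1, (e x.2).2), E.init⟩,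
      (e.prodCongr (Equiv.refl _)).trans (Equiv.prodAssoc _ _ _), .step _ _ hC (hE.comap _ _),
      fun p a => by
        obtain ⟨h₁, h₂⟩ := Prod.ext_iff.1 (he p.1 a)
        exact Prod.ext h₁ (Prod.ext h₂ rfl)⟩

theorem cascade {τ : Type u} (h₁ : FFRealizable δ₁) {δ₂ : Q₂ → τ → Q₂} (h₂ : FFRealizable δ₂)
    (g : A → Q₁ → τ) : FFRealizable (fun (q : Q₁ × Q₂) a => (δ₁ q.1 a, δ₂ q.2 (g a q.1))) := by
  obtain ⟨C₂, e₂, hC₂, he₂⟩ := h₂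
  exact (cascade_of_isFFCascade hC₂ h₁ g).congr ((Equiv.refl _).prodCongr e₂)
    fun q a => by simp [he₂]

end FFRealizable

/-- A flip-flop cascade whose state decodes, via `val`, to the product under `h` of the input
read so far. -/
structure FFCover {A M : Type u} [Monoid M] (h : A → M) : Type (u + 1) where
  Q : Type u
  δ : Q → A → Q
  realizable : FFRealizable δ
  start : Q
  Good : Q → Prop
  good_start : Good start
  good_δ : ∀ p a, Good p → Good (δ p a)
  val : Q → M
  val_start : val start = 1
  val_δ : ∀ p a, Good p → val (δ p a) = val p * h a

namespace FFCover

variable {A M : Type u} [Monoid M] {h : A → M}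

theorem val_foldl (P : FFCover h) {p : P.Q} (hp : P.Good p) (w : List A) :
    P.val (w.foldl P.δ p) = P.val p * (w.map h).prod := by
  induction w generalizing p with
  | nil => simp
  | cons a w ih =>
    rw [List.foldl_cons, ih (P.good_δ p a hp), P.val_δ p a hp, List.map_cons, List.prod_cons,
      mul_assoc]

def ofEqOne (h1 : ∀ a, h a = 1) : FFCover h where
  Q := ULift.{u} Bool
  δ q _ := q
  realizable := FFRealizable.uliftBool_id
  start := ⟨false⟩
  Good _ := True
  good_start := trivial
  good_δ _ _ _ := trivial
  val _ := 1
  val_start := rfl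
  val_δ _ a _ := by rw [h1, mul_one]

end FFCover

def IsAperiodic (M : Type u) [Monoid M] : Prop :=
  ∀ m : M, ∃ n : ℕ, m ^ (n + 1) = m ^ n

theorem IsAperiodic.eq_one_of_mul_eq_one {M : Type u} [Monoid M] (hM : IsAperiodic M) {c z : M}
    (h : c * z = 1) : c = 1 := by
  have hpow : ∀ k : ℕ, c ^ k * z ^ k = 1 := by
    intro k
    induction k with
    | zero => simp
    | succ k ih => rw [pow_succ, pow_succ', mul_assoc, ← mul_assoc c, h, one_mul, ih]
  obtain ⟨n, hn⟩ := hM c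
  calc c = c * (c ^ n * z ^ n) := by rw [hpow, mul_one]
    _ = c ^ n * z ^ n := by rw [← mul_assoc, ← pow_succ', hn]
    _ = 1 := hpow n

/-- The local divisor `cM ∩ Mc` of `M` at `c`, with product `xc ∘ cy = xcy` and identity `c`. -/
def LocalDivisor {M : Type u} [Monoid M] (c : M) : Type u :=
  {x : M // (∃ u, x = c * u) ∧ ∃ v, x = v * c}

namespace LocalDivisor

variable {M : Type u} [Monoid M] {c : M}

noncomputable def tail (x : LocalDivisor c) : M := x.2.1.choose

theorem val_eq_mul_tail (x : LocalDivisor c) : x.1 = c * x.tail := x.2.1.choose_spec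

noncomputable instance : Mul (LocalDivisor c) where
  mul x y := ⟨x.1 * y.tail, ⟨x.tail * y.tail, by rw [← mul_assoc, ← x.val_eq_mul_tail]⟩, by
    obtain ⟨v, hv⟩ := x.2.2
    obtain ⟨v', hv'⟩ := y.2.2
    exact ⟨v * v', by rw [hv, mul_assoc, ← y.val_eq_mul_tail, hv', mul_assoc]⟩⟩

/-- The product does not depend on the choice of `tail`, since `x ∈ Mc`. -/
theorem val_mul (x y : LocalDivisor c) {u : M} (hu : y.1 = c * u) : (x * y).1 = x.1 * u := by
  obtain ⟨v, hv⟩ := x.2.2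
  change x.1 * y.tail = x.1 * u
  rw [hv, mul_assoc, mul_assoc, ← y.val_eq_mul_tail, hu]

instance : One (LocalDivisor c) := ⟨⟨c, ⟨1, (mul_one c).symm⟩, 1, (one_mul c).symm⟩⟩

theorem val_one : (1 : LocalDivisor c).1 = c := rfl

noncomputable instance : Monoid (LocalDivisor c) where
  mul_assoc x y z := Subtype.ext <| by
    have hyz : (y * z).1 = c * (y.tail * z.tail) := by
      rw [val_mul y z z.val_eq_mul_tail, y.val_eq_mul_tail, mul_assoc]
    rw [val_mul _ z z.val_eq_mul_tail, val_mul x y y.val_eq_mul_tail, val_mul x _ hyz, mul_assoc]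
  one_mul x := Subtype.ext <| by rw [val_mul _ x x.val_eq_mul_tail, val_one, ← x.val_eq_mul_tail]
  mul_one x := Subtype.ext <| by rw [val_mul x 1 (u := 1) (mul_one c).symm, mul_one]

theorem val_pow_succ (x : LocalDivisor c) (n : ℕ) : (x ^ (n + 1)).1 = x.1 * x.tail ^ n := by
  induction n with
  | zero => rw [pow_one, pow_zero, mul_one]
  | succ n ih => rw [pow_succ, val_mul _ x x.val_eq_mul_tail, ih, mul_assoc, ← pow_succ]

theorem isAperiodic (hM : IsAperiodic M) : IsAperiodic (LocalDivisor c) := by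
  intro x
  obtain ⟨n, hn⟩ := hM x.tail
  exact ⟨n + 1, Subtype.ext <| by rw [val_pow_succ, val_pow_succ, hn]⟩

instance [Finite M] : Finite (LocalDivisor c) := Subtype.finite

/-- `1 ∉ cM`, as `c ≠ 1` has no right inverse in an aperiodic monoid. -/
theorem card_lt [Finite M] (hM : IsAperiodic M) (hc : c ≠ 1) :
    Nat.card (LocalDivisor c) < Nat.card M :=
  Finite.card_subtype_lt (x := 1) fun ⟨⟨_, hu⟩, _⟩ => hc (hM.eq_one_of_mul_eq_one hu.symm)

def sandwich (c m : M) : LocalDivisor c := ⟨c * m * c, ⟨m * c, mul_assoc c m c⟩, c * m, rfl⟩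

theorem val_mul_sandwich (x : LocalDivisor c) (m : M) : (x * sandwich c m).1 = x.1 * (m * c) :=
  val_mul x _ (mul_assoc c m c)

end LocalDivisor

section LocalDivisorStep

variable {A M : Type u} [Monoid M] [DecidableEq M] (h : A → M) (c : M)

def skipLetter (a : A) : M := if h a = c then 1 else h a

def frozenLetter (x : A × ULift.{u} Bool) : M := if x.2.down then 1 else skipLetter h c x.1

def sandwichLetter (x : A × ULift.{u} Bool × M) : LocalDivisor c :=
  if h x.1 = c ∧ x.2.1.down then LocalDivisor.sandwich c x.2.2 else 1

variable {h c}

theorem skipLetter_of_ne_one {a : A} (ha : skipLetter h c a ≠ 1) :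
    skipLetter h c a = h a ∧ h a ≠ c := by
  unfold skipLetter at ha ⊢
  split_ifs at ha ⊢ with hac
  · exact absurd rfl ha
  · exact ⟨rfl, hac⟩

theorem frozenLetter_of_ne_one {x : A × ULift.{u} Bool} (hx : frozenLetter h c x ≠ 1) :
    frozenLetter h c x = h x.1 ∧ h x.1 ≠ c := by
  unfold frozenLetter at hx ⊢
  split_ifs at hx ⊢
  · exact absurd rfl hx
  · exact skipLetter_of_ne_one hx

/-- Writing the input as `u₀ a₁ u₁ ⋯ aₖ uₖ` with `h aᵢ = c` and no such letter in the `uᵢ`,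
the product is `h u₀ · (c h(u₁) c ⋯ c h(uₖ₋₁) c) · h uₖ`, whose middle factor is a product in the
local divisor at `c`. The state carries a flag (`k > 0`), a cover of `h u₀`, a cover of the
current `h uᵢ` restarted at every `aᵢ`, and a cover of the middle factor. -/
def FFCover.localDivisorStep (P : FFCover (frozenLetter h c)) (S : FFCover (skipLetter h c))
    (L : FFCover (sandwichLetter h c)) : FFCover h where
  Q := ((ULift.{u} Bool × P.Q) × S.Q) × L.Q
  δ
    | (((f, x), y), z), a => (((if h a = c then ⟨true⟩ else f, P.δ x (a, f)),
        if h a = c then S.start else S.δ y a), L.δ z (a, f, S.val y))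
  realizable :=
    (((FFRealizable.uliftBool_id.ite _ ⟨true⟩).cascade P.realizable fun a f => (a, f)).cascade
      (S.realizable.ite _ S.start) fun a _ => a).cascade L.realizable
      fun a q => (a, q.1.1, S.val q.2)
  start := (((⟨false⟩, P.start), S.start), L.start)
  Good | (((f, x), y), z) => P.Good x ∧ S.Good y ∧ L.Good z ∧ (f.down = false → L.val z = 1)
  good_start := ⟨P.good_start, S.good_start, L.good_start, fun _ => L.val_start⟩
  good_δ := by
    rintro ⟨⟨⟨⟨f⟩, x⟩, y⟩, z⟩ a ⟨hx, hy, hz, hf⟩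
    refine ⟨P.good_δ _ _ hx, ?_, L.good_δ _ _ hz, ?_⟩
    · split_ifs
      exacts [S.good_start, S.good_δ _ _ hy]
    · by_cases hac : h a = c
      · simp [hac]
      · intro hf'
        simp only [hac, ↓reduceIte] at hf'
        rw [L.val_δ _ _ hz, hf hf', sandwichLetter, if_neg (by tauto), mul_one]
  val
    | (((f, x), y), z) => if f.down then P.val x * (L.val z).1 * S.val y else P.val x
  val_start := by simp [P.val_start]
  val_δ := by
    rintro ⟨⟨⟨⟨f⟩, x⟩, y⟩, z⟩ a ⟨hx, hy, hz, hf⟩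
    dsimp only
    rw [P.val_δ _ _ hx, L.val_δ _ _ hz]
    by_cases hac : h a = c <;> cases f
    · simp [hac, hf, frozenLetter, skipLetter, sandwichLetter, S.val_start, LocalDivisor.val_one]
    · simp [hac, frozenLetter, sandwichLetter, S.val_start, LocalDivisor.val_mul_sandwich,
        mul_assoc]
    · simp [hac, frozenLetter, skipLetter]
    · simp [hac, frozenLetter, sandwichLetter, S.val_δ _ _ hy, skipLetter, mul_assoc]

end LocalDivisorStep

theorem ncard_range_sdiff_one_lt {A B M : Type u} [One M] [Finite M] {h : A → M} {f : B → M}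
    {c : M} (hc : c ∈ Set.range h \ {1}) (hf : ∀ b, f b ≠ 1 → ∃ a, f b = h a ∧ h a ≠ c) :
    (Set.range f \ {1}).ncard < (Set.range h \ {1}).ncard := by
  refine lt_of_le_of_lt (Set.ncard_le_ncard ?_) (Set.ncard_sdiff_singleton_lt_of_mem hc)
  rintro _ ⟨⟨b, rfl⟩, hb⟩
  obtain ⟨a, ha, hac⟩ := hf b hb
  exact ⟨⟨⟨a, ha.symm⟩, hb⟩, ha ▸ hac⟩

theorem nonempty_ffCover {M : Type u} [Monoid M] [Finite M] (hM : IsAperiodic M) {A : Type u}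
    (h : A → M) : Nonempty (FFCover h) := by
  classical
  induction hn : Nat.card M using Nat.strong_induction_on generalizing M A with
  | _ n ihM =>
  induction hk : (Set.range h \ {1}).ncard using Nat.strong_induction_on generalizing A with
  | _ k ihk =>
  by_cases h1 : ∀ a, h a = 1
  · exact ⟨.ofEqOne h1⟩
  obtain ⟨a₀, ha₀⟩ := not_forall.1 h1
  have hc : h a₀ ∈ Set.range h \ {1} := ⟨⟨a₀, rfl⟩, ha₀⟩
  obtain ⟨P⟩ := ihk _ (hk ▸ ncard_range_sdiff_one_lt hc fun x hx =>
    ⟨x.1, frozenLetter_of_ne_one hx⟩) (frozenLetter h (h a₀)) rfl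
  obtain ⟨S⟩ := ihk _ (hk ▸ ncard_range_sdiff_one_lt hc fun a ha =>
    ⟨a, skipLetter_of_ne_one ha⟩) (skipLetter h (h a₀)) rfl
  obtain ⟨L⟩ := ihM _ (hn ▸ LocalDivisor.card_lt hM ha₀) (LocalDivisor.isAperiodic hM)
    (sandwichLetter h (h a₀)) rfl
  exact ⟨.localDivisorStep P S L⟩

theorem foldl_npow {σ Q : Type u} (δ : Q → σ → Q) (w : List σ) (k : ℕ) (q : Q) :
    (npow w k).foldl δ q = (fun q => w.foldl δ q)^[k] q := by
  induction k generalizing q with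
  | zero => rfl
  | succ k ih => rw [npow, List.foldl_append, ih, Function.iterate_succ_apply]

theorem iterate_succ_eq_of_iterate_eq {α : Type u} {g : α → α}
    (hg : ∀ q k, 1 ≤ k → g^[k] q = q → g q = q) {i j : ℕ} (hij : i < j) (h : g^[i] = g^[j]) :
    g^[i + 1] = g^[i] := by
  funext q
  have hfix : g^[j - i] (g^[i] q) = g^[i] q := by
    rw [← Function.iterate_add_apply, Nat.sub_add_cancel hij.le, h]
  rw [Function.iterate_succ_apply', hg _ _ (Nat.sub_pos_of_lt hij) hfix]

namespace Automaton

variable {σ γ : Type u} (A : Automaton σ γ)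

def letterAction (s : σ) : (Function.End A.Q)ᵐᵒᵖ := .op fun q => A.δ q s

def transitionMonoid : Submonoid (Function.End A.Q)ᵐᵒᵖ :=
  MonoidHom.mrange (FreeMonoid.lift A.letterAction)

def transitionLetter (s : σ) : A.transitionMonoid :=
  ⟨A.letterAction s, FreeMonoid.of s, FreeMonoid.lift_eval_of _ _⟩

instance [Finite A.Q] : Finite A.transitionMonoid :=
  have : Finite (Function.End A.Q)ᵐᵒᵖ := Finite.of_equiv (A.Q → A.Q) MulOpposite.opEquiv
  Subtype.finite

theorem unop_prod_letterAction_apply (w : List σ) (q : A.Q) :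
    (w.map A.letterAction).prod.unop q = w.foldl A.δ q := by
  induction w generalizing q with
  | nil => rfl
  | cons s w ih => exact ih (A.δ q s)

theorem coe_prod_transitionLetter (w : List σ) :
    ((w.map A.transitionLetter).prod : (Function.End A.Q)ᵐᵒᵖ) = (w.map A.letterAction).prod := by
  rw [SubmonoidClass.coe_list_prod, List.map_map]
  rfl

theorem unop_coe_pow (x : A.transitionMonoid) (n : ℕ) :
    ((x ^ n : A.transitionMonoid) : (Function.End A.Q)ᵐᵒᵖ).unop =
      (x : (Function.End A.Q)ᵐᵒᵖ).unop^[n] := by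
  rw [SubmonoidClass.coe_pow, MulOpposite.unop_pow]
  exact hom_coe_pow (fun f : Function.End A.Q => (f : A.Q → A.Q)) rfl (fun _ _ => rfl) _ n

theorem pow_eq_pow_iff_iterate_eq (x : A.transitionMonoid) (m n : ℕ) :
    x ^ m = x ^ n ↔
      (x : (Function.End A.Q)ᵐᵒᵖ).unop^[m] = (x : (Function.End A.Q)ᵐᵒᵖ).unop^[n] := by
  rw [← unop_coe_pow, ← unop_coe_pow]
  exact ⟨fun h => h ▸ rfl, fun h => Subtype.ext (MulOpposite.unop_injective h)⟩

theorem isAperiodic_transitionMonoid [Finite A.Q] (hA : CounterFree A) :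
    IsAperiodic A.transitionMonoid := by
  intro x
  obtain ⟨w, hw⟩ := x.2
  have hpow := A.pow_eq_pow_iff_iterate_eq x
  set g : A.Q → A.Q := (x : (Function.End A.Q)ᵐᵒᵖ).unop with hg
  have hg_word : g = fun q => w.toList.foldl A.δ q :=
    funext fun q => by rw [hg, ← hw, FreeMonoid.lift_apply, unop_prod_letterAction_apply]
  have hg_cf : ∀ q k, 1 ≤ k → g^[k] q = q → g q = q := by
    rw [hg_word]
    exact fun q k hk hq => hA _ q k hk (by rwa [foldl_npow])
  obtain ⟨i, j, hij, hxij⟩ :=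
    Finite.exists_ne_map_eq_of_infinite (x ^ · : ℕ → A.transitionMonoid)
  rcases hij.lt_or_gt with hlt | hlt
  · exact ⟨i, (hpow _ _).2 (iterate_succ_eq_of_iterate_eq hg_cf hlt ((hpow _ _).1 hxij))⟩
  · exact ⟨j, (hpow _ _).2 (iterate_succ_eq_of_iterate_eq hg_cf hlt ((hpow _ _).1 hxij.symm))⟩

end Automaton

theorem counterFree_captured_by_flipflop_cascade_general {σ γ : Type u}
    (A : Automaton σ γ) [Finite A.Q] (hA : CounterFree A) :
    ∃ (D : SemiAut σ) (θ' : D.Q → σ → γ), IsFFCascade D ∧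
      ∀ w : NEStr σ, Automaton.fn ⟨D.Q, D.δ, D.init, θ'⟩ w = Automaton.fn A w := by
  obtain ⟨P⟩ := nonempty_ffCover (A.isAperiodic_transitionMonoid hA) A.transitionLetter
  obtain ⟨C, e, hC, he⟩ := P.realizable
  have hrun (v : List σ) :
      (P.val (e (v.foldl C.δ (e.symm P.start))) : (Function.End A.Q)ᵐᵒᵖ).unop A.init =
        v.foldl A.δ A.init := by
    rw [← List.foldl_hom e fun p a => (he p a).symm, e.apply_symm_apply,
      P.val_foldl P.good_start, P.val_start, one_mul, A.coe_prod_transitionLetter,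
      A.unop_prod_letterAction_apply]
  refine ⟨⟨C.Q, C.δ, e.symm P.start⟩,
    fun p => A.θ ((P.val (e p) : (Function.End A.Q)ᵐᵒᵖ).unop A.init), hC.withInit _, fun w => ?_⟩
  exact congrArg (A.θ · w.lastLetter) (hrun _)

/-- Krohn–Rhodes for counter-free automata: every counter-free automaton over a
finite input alphabet (with finitely many states) is captured by an automaton
whose core semiautomaton is a cascade product of flip-flop semiautomata: there
exist flip-flop components and an output function such that the resulting
automaton implements the same string function. -/
theorem counterFree_captured_by_flipflop_cascade {σ γ : Type u} [Finite σ]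
    (A : Automaton σ γ) [Finite A.Q] (hA : CounterFree A) :
    ∃ (D : SemiAut σ) (θ' : D.Q → σ → γ), IsFFCascade D ∧
      ∀ w : NEStr σ, Automaton.fn ⟨D.Q, D.δ, D.init, θ'⟩ w = Automaton.fn A w :=
  counterFree_captured_by_flipflop_cascade_general A hA
end
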